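/- arXiv:1803.01976 — 3 statements merged into one kernel-verified Lean document; each statement's English description precedes it below -/
import Mathlib

section
/- As formal power series in q, Σ_{n≥0} q^(n(n+1)) (-q²;q²)_n / ((q;q²)_{n+1})² = Σ_{n≥0} q^n (-q;q²)_n / (q;q²)_{n+1}. -/
open PowerSeries

noncomputable section

/-- `Eul m` is E(q^m) = ∏_{k ≥ 1} (1 - q^{m k}) as a formal power series over ℚ.
Its n-th coefficient equals that of the partial product up to k = n+1, since
later factors do not affect coefficients up to n. -/
def Eul (m : ℕ) : PowerSeries ℚ :=
  PowerSeries.mk fun n =>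
    PowerSeries.coeff n
      (∏ k ∈ Finset.range (n + 1), (1 - (PowerSeries.X : PowerSeries ℚ) ^ (m * (k + 1))))

/-- q-shifted factorial (a; b)_n = ∏_{k=0}^{n-1} (1 - a b^k). -/
def qpoch (a b : PowerSeries ℚ) (n : ℕ) : PowerSeries ℚ :=
  ∏ k ∈ Finset.range n, (1 - a * b ^ k)

/-- φ(-q^m) = E(q^m)² / E(q^{2m}). -/
def phiN (m : ℕ) : PowerSeries ℚ := Eul m ^ 2 * (Eul (2 * m))⁻¹

/-- ψ(q^m) = E(q^{2m})² / E(q^m). -/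
def psiN (m : ℕ) : PowerSeries ℚ := Eul (2 * m) ^ 2 * (Eul m)⁻¹

/-- w(q^m) = E(q^m) E(q^{6m})³ / (E(q^{2m}) E(q^{3m})³). -/
def wq (m : ℕ) : PowerSeries ℚ := Eul m * Eul (6 * m) ^ 3 * (Eul (2 * m) * Eul (3 * m) ^ 3)⁻¹

/-- X = φ(-q³)⁴ / φ(-q)⁴. -/
def Xs : PowerSeries ℚ := phiN 3 ^ 4 * (phiN 1 ^ 4)⁻¹

/-- Ξ = ψ(q)² φ(-q⁹) / (φ(-q) ψ(q⁹)²), so that ξ = q⁻² Ξ. -/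
def XiS : PowerSeries ℚ := psiN 1 ^ 2 * phiN 9 * (phiN 1 * psiN 9 ^ 2)⁻¹

/-- The U-operator: U(Σ c_n q^n) = Σ c_{3n} q^n. -/
def Uop (F : PowerSeries ℚ) : PowerSeries ℚ :=
  PowerSeries.mk fun n => PowerSeries.coeff (3 * n) F

/-- U(ξ F): its n-th coefficient is the (3n+2)-th coefficient of Ξ F. -/
def Uxi (F : PowerSeries ℚ) : PowerSeries ℚ :=
  PowerSeries.mk fun n => PowerSeries.coeff (3 * n + 2) (XiS * F)

/-- The n-th summand of β(q): q^{n(n+1)} (-q²;q²)_n / ((q;q²)_{n+1})². -/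
def betaTerm (n : ℕ) : PowerSeries ℚ :=
  PowerSeries.X ^ (n * (n + 1)) * qpoch (-(PowerSeries.X ^ 2)) (PowerSeries.X ^ 2) n
    * (qpoch PowerSeries.X (PowerSeries.X ^ 2) (n + 1) ^ 2)⁻¹

/-- β(q): its N-th coefficient is the (finite) sum of the N-th coefficients of
the summands with index ≤ N, legitimate since the n-th summand has q-order ≥ n(n+1) ≥ n. -/
def betaF : PowerSeries ℚ :=
  PowerSeries.mk fun N => ∑ m ∈ Finset.range (N + 1), PowerSeries.coeff N (betaTerm m)

/-- 𝔟(n), the n-th coefficient of β(q). -/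
def bcoef (n : ℕ) : ℚ := PowerSeries.coeff n betaF

/-- g(n), the n-th coefficient of E(q²)⁵ / E(q)⁴. -/
def gcoef (n : ℕ) : ℚ := PowerSeries.coeff n (Eul 2 ^ 5 * (Eul 1 ^ 4)⁻¹)

namespace Stmt1Aux

open Finset

/-- Gaussian binomial [M, n] with base q², as a power series over ℚ. -/
def Gb : ℕ → ℕ → PowerSeries ℚ
  | 0, 0 => 1
  | 0, _+1 => 0
  | _+1, 0 => 1
  | M+1, n+1 => Gb M n + X ^ (2*(n+1)) * Gb M (n+1)

lemma Gb_zero (M : ℕ) : Gb M 0 = 1 := by cases M <;> rfl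

lemma Gb_eq_zero : ∀ {M n : ℕ}, M < n → Gb M n = 0 := by
  intro M
  induction M with
  | zero => intro n h; match n, h with | n+1, _ => rfl
  | succ M ih =>
    intro n h
    match n, h with
    | n+1, h =>
      show Gb M n + X ^ (2*(n+1)) * Gb M (n+1) = 0
      rw [ih (by omega), ih (by omega), mul_zero, add_zero]

lemma Gb_diag : ∀ M, Gb M M = 1 := by
  intro M
  induction M with
  | zero => rfl
  | succ M ih =>
    show Gb M M + X ^ (2*(M+1)) * Gb M (M+1) = 1
    rw [ih, Gb_eq_zero (by omega), mul_zero, add_zero]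

lemma Gb_succ_succ (M n : ℕ) :
    Gb (M+1) (n+1) = Gb M n + X ^ (2*(n+1)) * Gb M (n+1) := rfl

/-- symmetry contiguous relation. -/
lemma P2 : ∀ M n : ℕ, (1 - X^(2*(n+1))) * Gb M (n+1)
    = (1 - X^(2*(M-n))) * Gb M n := by
  intro M
  induction M with
  | zero =>
    intro n
    cases n with
    | zero => show (1 - X^2) * Gb 0 1 = (1 - X^(2*0)) * Gb 0 0; simp [Gb]
    | succ n =>
      rw [Gb_eq_zero (by omega), Gb_eq_zero (by omega), mul_zero, mul_zero]
  | succ M ih =>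
    intro n
    cases n with
    | zero =>
      have h := ih 0
      rw [Nat.sub_zero, Gb_zero] at h
      rw [Gb_succ_succ, Gb_zero, Gb_zero, Nat.sub_zero]
      linear_combination (X^2 : PowerSeries ℚ) * h
    | succ n =>
      rcases le_or_gt (n+1) M with hle | hlt
      · obtain ⟨d, hd⟩ := Nat.exists_eq_add_of_le hle
        subst hd
        have h1 := ih n
        have h2 := ih (n+1)
        rw [show n + 1 + d - n = d + 1 by omega] at h1
        rw [show n + 1 + d - (n+1) = d by omega] at h2
        rw [show n + 1 + d + 1 - (n+1) = d + 1 by omega]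
        rw [Gb_succ_succ, Gb_succ_succ]
        linear_combination (X^(2*(n+2)) : PowerSeries ℚ) * h2 + h1
      · -- n ≥ M
        rw [Gb_succ_succ, Gb_succ_succ,
          Gb_eq_zero (show M < n+2 by omega), Gb_eq_zero (show M < n+1 by omega)]
        simp only [mul_zero, add_zero, zero_add]
        rcases Nat.lt_or_ge M n with h2 | h2
        · rw [Gb_eq_zero h2]; ring
        · have hMn : M = n := by omega
          subst hMn
          rw [show M + 1 - (M + 1) = 0 from by omega]
          simp


/-- (-q²;q²)_n -/
def Pp (n : ℕ) : PowerSeries ℚ := qpoch (-(X^2)) (X^2) n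

/-- (-q;q²)_M -/
def Aq (M : ℕ) : PowerSeries ℚ := qpoch (-X) (X^2) M

/-- (q^{2n+3};q²)_{M-n} -/
def Cq (M n : ℕ) : PowerSeries ℚ := qpoch (X^(2*n+3)) (X^2) (M - n)

lemma qpoch_succ (a b : PowerSeries ℚ) (n : ℕ) :
    qpoch a b (n+1) = qpoch a b n * (1 - a * b ^ n) :=
  Finset.prod_range_succ _ _

lemma qpoch_zero (a b : PowerSeries ℚ) : qpoch a b 0 = 1 :=
  Finset.prod_range_zero _

lemma Pp_succ (n : ℕ) : Pp (n+1) = Pp n * (1 + X^(2*n+2)) := by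
  rw [Pp, Pp, qpoch_succ, ← pow_mul]
  ring

lemma Aq_succ (M : ℕ) : Aq (M+1) = Aq M * (1 + X^(2*M+1)) := by
  rw [Aq, Aq, qpoch_succ, ← pow_mul]
  ring

lemma Cq_diag (n : ℕ) : Cq n n = 1 := by
  rw [Cq, Nat.sub_self, qpoch_zero]

lemma Cq_succ_left {M n : ℕ} (h : n ≤ M) :
    Cq (M+1) n = Cq M n * (1 - X^(2*M+3)) := by
  obtain ⟨d, rfl⟩ := Nat.exists_eq_add_of_le h
  rw [Cq, Cq, show n + d + 1 - n = d + 1 from by omega, show n + d - n = d from by omega,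
    qpoch_succ, ← pow_mul, ← pow_add, show 2*n+3+2*d = 2*(n+d)+3 from by omega]

lemma qpoch_shift (c : ℕ) : ∀ m : ℕ, qpoch (X^c) (X^2) (m+1)
    = (1 - X^c) * qpoch (X^(c+2)) (X^2) m := by
  intro m
  induction m with
  | zero => rw [qpoch_succ, qpoch_zero, qpoch_zero]; simp
  | succ m ih =>
    rw [qpoch_succ, ih, qpoch_succ, ← pow_mul, ← pow_mul, ← pow_add, ← pow_add,
      show c + 2*(m+1) = c+2+2*m from by omega]
    ring

lemma Cq_peel {M n : ℕ} (h : n < M) :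
    Cq M n = (1 - X^(2*n+3)) * Cq M (n+1) := by
  rw [Cq, Cq, show M - n = (M - (n+1)) + 1 from by omega, qpoch_shift,
    show 2*n+3+2 = 2*(n+1)+3 from by omega]

/-- summand of the key identity -/
def fM (M n : ℕ) : PowerSeries ℚ := X^(n*n) * Pp n * Gb M n * Cq M n

/-- telescoping certificate -/
def gM (M : ℕ) : ℕ → PowerSeries ℚ
  | 0 => 0
  | k+1 => -(X^(2*(M-k)) * X^((k+1)*(k+1)) * Pp (k+1) * Gb M k * Cq M k)

lemma gM_zero_of_gt {M k : ℕ} (h : M < k) : gM M (k+1) = 0 := by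
  show -(X^(2*(M-k)) * X^((k+1)*(k+1)) * Pp (k+1) * Gb M k * Cq M k) = 0
  rw [Gb_eq_zero h]
  ring

/-- the local (WZ) identity -/
lemma LI (M n : ℕ) :
    fM (M+1) n = (1 + X^(2*M+1)) * fM M n + gM M (n+1) - gM M n := by
  cases n with
  | zero =>
    show X^(0*0) * Pp 0 * Gb (M+1) 0 * Cq (M+1) 0
      = (1 + X^(2*M+1)) * (X^(0*0) * Pp 0 * Gb M 0 * Cq M 0)
        + -(X^(2*(M-0)) * X^(1*1) * Pp 1 * Gb M 0 * Cq M 0) - 0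
    rw [Gb_zero, Gb_zero, Cq_succ_left (Nat.zero_le M), Pp, Pp, qpoch_zero, qpoch_succ,
      qpoch_zero, Nat.sub_zero]
    ring
  | succ k =>
    rcases Nat.lt_or_ge M k with hlt | hge
    · -- k > M : everything vanishes
      show fM (M+1) (k+1) = (1 + X^(2*M+1)) * fM M (k+1) + gM M (k+2) - gM M (k+1)
      rw [fM, fM, Gb_eq_zero (show M + 1 < k + 1 by omega),
        Gb_eq_zero (show M < k + 1 by omega), gM_zero_of_gt (show M < k+1 by omega),
        show gM M (k+1) = -(X^(2*(M-k)) * X^((k+1)*(k+1)) * Pp (k+1) * Gb M k * Cq M k)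
          from rfl, Gb_eq_zero hlt]
      ring
    · rcases Nat.lt_or_ge k M with hlt2 | hge2
      · -- main case : k < M, i.e. k+1 ≤ M
        obtain ⟨d, rfl⟩ := Nat.exists_eq_add_of_le (Nat.succ_le_of_lt hlt2)
        -- M = k + 1 + d
        have hP2 := P2 (k+1+d) k
        rw [show k+1+d-k = d+1 from by omega] at hP2
        show fM (k+1+d+1) (k+1) = (1 + X^(2*(k+1+d)+1)) * fM (k+1+d) (k+1)
          + gM (k+1+d) (k+2) - gM (k+1+d) (k+1)
        rw [fM, fM,
          show gM (k+1+d) (k+2) = -(X^(2*((k+1+d)-(k+1))) * X^((k+2)*(k+2)) * Pp (k+2)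
            * Gb (k+1+d) (k+1) * Cq (k+1+d) (k+1)) from rfl,
          show gM (k+1+d) (k+1) = -(X^(2*((k+1+d)-k)) * X^((k+1)*(k+1)) * Pp (k+1)
            * Gb (k+1+d) k * Cq (k+1+d) k) from rfl,
          Gb_succ_succ, Cq_succ_left (show k+1 ≤ k+1+d by omega),
          Cq_peel (show k < k+1+d by omega), Pp_succ (k+1),
          show k+1+d-(k+1) = d from by omega, show k+1+d-k = d+1 from by omega]
        linear_combination (-(X^((k+1)*(k+1)) * Pp (k+1) * Cq (k+1+d) (k+1)) : PowerSeries ℚ) * hP2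
      · -- k = M : boundary
        have hkM : k = M := by omega
        subst hkM
        show fM (k+1) (k+1) = (1 + X^(2*k+1)) * fM k (k+1) + gM k (k+2) - gM k (k+1)
        rw [fM, fM, Gb_eq_zero (show k < k+1 by omega),
          gM_zero_of_gt (show k < k+1 by omega),
          show gM k (k+1) = -(X^(2*(k-k)) * X^((k+1)*(k+1)) * Pp (k+1) * Gb k k * Cq k k)
            from rfl, Gb_diag, Gb_diag, Cq_diag, Cq_diag, Nat.sub_self]
        ring

/-- the key identity -/
lemma KI : ∀ M : ℕ, (∑ n ∈ Finset.range (M+1), fM M n) = Aq M := by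
  intro M
  induction M with
  | zero =>
    rw [Finset.sum_range_one, fM, Gb_zero, Cq, Nat.sub_zero, qpoch_zero, Pp, qpoch_zero, Aq,
      qpoch_zero]
    ring
  | succ M ih =>
    have tele : (∑ n ∈ Finset.range (M+2), (gM M (n+1) - gM M n)) = gM M (M+2) - gM M 0 :=
      Finset.sum_range_sub (gM M) (M+2)
    calc (∑ n ∈ Finset.range (M+2), fM (M+1) n)
        = ∑ n ∈ Finset.range (M+2),
            ((1 + X^(2*M+1)) * fM M n + (gM M (n+1) - gM M n)) := by
          apply Finset.sum_congr rfl
          intro n _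
          rw [LI M n]; ring
      _ = (1 + X^(2*M+1)) * (∑ n ∈ Finset.range (M+2), fM M n)
            + (gM M (M+2) - gM M 0) := by
          rw [Finset.sum_add_distrib, tele, Finset.mul_sum]
      _ = Aq (M+1) := by
          rw [Finset.sum_range_succ, ih, fM, Gb_eq_zero (show M < M+1 by omega),
            gM_zero_of_gt (show M < M+1 by omega), Aq_succ]
          show (1 + X^(2*M+1)) * (Aq M + X ^ ((M+1)*(M+1)) * Pp (M+1) * 0 * Cq M (M+1))
            + (0 - gM M 0) = Aq M * (1 + X^(2*M+1))
          show (1 + X^(2*M+1)) * (Aq M + X ^ ((M+1)*(M+1)) * Pp (M+1) * 0 * Cq M (M+1))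
            + (0 - 0) = Aq M * (1 + X^(2*M+1))
          ring


/-- partial-sum representation of X^n/(q;q²)_{n+1} -/
def Vb (n : ℕ) : PowerSeries ℚ :=
  PowerSeries.mk fun k => ∑ M ∈ Finset.range (k+1), PowerSeries.coeff k (X^M * Gb M n)

lemma coeff_X_pow_mul_lt {S : PowerSeries ℚ} {m d : ℕ} (h : d < m) :
    PowerSeries.coeff d (X^m * S) = 0 := by
  rw [PowerSeries.coeff_X_pow_mul', if_neg (by omega)]

lemma coeff_succ_X_mul' (k : ℕ) (T : PowerSeries ℚ) :
    PowerSeries.coeff (k+1) (X * T) = PowerSeries.coeff k T := by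
  rw [mul_comm, PowerSeries.coeff_succ_mul_X]

lemma Vrec (n : ℕ) : Vb (n+1) = X * Vb n + X^(2*n+3) * Vb (n+1) := by
  ext k
  cases k with
  | zero =>
    have h1 : PowerSeries.coeff 0 (Vb (n+1)) = 0 := by
      rw [Vb, PowerSeries.coeff_mk, Finset.sum_range_one, pow_zero, one_mul,
        Gb_eq_zero (show 0 < n+1 by omega), map_zero]
    rw [h1, map_add, PowerSeries.coeff_zero_eq_constantCoeff,
      map_mul, map_mul, PowerSeries.constantCoeff_X, map_pow, PowerSeries.constantCoeff_X,
      zero_pow (show 2*n+3 ≠ 0 by omega), zero_mul, zero_mul, add_zero]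
  | succ k =>
    rw [Vb, PowerSeries.coeff_mk, Finset.sum_range_succ', pow_zero, one_mul,
      Gb_eq_zero (show 0 < n+1 by omega), map_zero, add_zero]
    have hterm : ∀ m : ℕ, PowerSeries.coeff (k+1) (X^(m+1) * Gb (m+1) (n+1))
        = PowerSeries.coeff (k+1) (X * (X^m * Gb m n))
          + PowerSeries.coeff (k+1) (X^(2*n+3) * (X^m * Gb m (n+1))) := by
      intro m
      rw [← map_add]
      congr 1
      rw [Gb_succ_succ]
      ring
    rw [Finset.sum_congr rfl (fun m _ => hterm m), Finset.sum_add_distrib, map_add]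
    congr 1
    · -- first piece equals coeff (k+1) (X * Vb n)
      rw [coeff_succ_X_mul', Vb, PowerSeries.coeff_mk]
      apply Finset.sum_congr rfl
      intro m _
      rw [coeff_succ_X_mul']
    · -- second piece
      rcases Nat.lt_or_ge (k+1) (2*n+3) with h | h
      · rw [coeff_X_pow_mul_lt h]
        apply Finset.sum_eq_zero
        intro m _
        rw [← mul_assoc, ← pow_add]
        exact coeff_X_pow_mul_lt (by omega)
      · obtain ⟨d, hd⟩ := Nat.exists_eq_add_of_le h
        rw [show k + 1 = d + (2*n+3) from by omega, PowerSeries.coeff_X_pow_mul]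
        have hsub : Finset.range (d+1) ⊆ Finset.range (d + (2*n+3)) :=
          Finset.range_subset_range.mpr (by omega)
        rw [PowerSeries.coeff_mk]
        rw [← Finset.sum_subset hsub]
        · apply Finset.sum_congr rfl
          intro m _
          rw [PowerSeries.coeff_X_pow_mul]
        · intro m _ hm
          rw [Finset.mem_range, not_lt] at hm
          rw [PowerSeries.coeff_X_pow_mul]
          exact coeff_X_pow_mul_lt (by omega)

lemma Dq_succ (m : ℕ) : qpoch X (X^2) (m+1) = qpoch X (X^2) m * (1 - X^(2*m+1)) := by
  rw [qpoch_succ, ← pow_mul]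
  ring

lemma VD : ∀ n, Vb n * qpoch X (X^2) (n+1) = X^n := by
  intro n
  induction n with
  | zero =>
    have h1 : qpoch X (X^2) 1 = 1 - X := by
      rw [qpoch_succ, qpoch_zero]; ring
    have hV0 : ∀ k, PowerSeries.coeff k (Vb 0) = 1 := by
      intro k
      rw [Vb, PowerSeries.coeff_mk]
      have : ∀ M ∈ Finset.range (k+1), PowerSeries.coeff k (X^M * Gb M 0)
          = if k = M then 1 else 0 := by
        intro M _
        rw [Gb_zero, mul_one, PowerSeries.coeff_X_pow]
      rw [Finset.sum_congr rfl this, Finset.sum_ite_eq (Finset.range (k+1)) k (fun _ => (1:ℚ)),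
        if_pos (Finset.mem_range.mpr (by omega))]
    rw [h1, pow_zero]
    ext k
    rw [mul_sub, mul_one, map_sub]
    cases k with
    | zero =>
      rw [PowerSeries.coeff_zero_mul_X, hV0, sub_zero, PowerSeries.coeff_zero_one]
    | succ k =>
      rw [PowerSeries.coeff_succ_mul_X, hV0, hV0, sub_self, PowerSeries.coeff_one,
        if_neg (by omega)]
  | succ n ih =>
    have h2 : Vb (n+1) * (1 - X^(2*n+3)) = X * Vb n := by
      linear_combination Vrec n
    calc Vb (n+1) * qpoch X (X^2) (n+1+1)
        = (Vb (n+1) * (1 - X^(2*n+3))) * qpoch X (X^2) (n+1) := by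
          rw [Dq_succ (n+1), show 2*(n+1)+1 = 2*n+3 from by omega]; ring
      _ = X * (Vb n * qpoch X (X^2) (n+1)) := by rw [h2]; ring
      _ = X^(n+1) := by rw [ih]; ring


lemma cc_DqX (m : ℕ) : PowerSeries.constantCoeff (qpoch X (X^2) m) = 1 := by
  induction m with
  | zero => rw [qpoch_zero]; simp
  | succ m ih =>
    rw [qpoch_succ, map_mul, ih, map_sub, map_one, map_mul, PowerSeries.constantCoeff_X,
      zero_mul, sub_zero, one_mul]

lemma cc_qpoch_pow (c m : ℕ) (hc : c ≠ 0) :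
    PowerSeries.constantCoeff (qpoch (X^c) (X^2) m) = 1 := by
  induction m with
  | zero => rw [qpoch_zero]; simp
  | succ m ih =>
    rw [qpoch_succ, map_mul, ih, map_sub, map_one, map_mul, map_pow,
      PowerSeries.constantCoeff_X, zero_pow hc, zero_mul, sub_zero, one_mul]

lemma cc_Cq (M n : ℕ) : PowerSeries.constantCoeff (Cq M n) = 1 :=
  cc_qpoch_pow _ _ (by omega)

lemma Dsplit : ∀ {d n : ℕ}, qpoch X (X^2) (n+d+1) = qpoch X (X^2) (n+1) * Cq (n+d) n := by
  intro d
  induction d with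
  | zero =>
    intro n
    simp only [Nat.add_zero, Cq_diag, mul_one]
  | succ d ih =>
    intro n
    rw [show n+(d+1)+1 = (n+d+1)+1 from by omega, Dq_succ, ih,
      show n+(d+1) = (n+d)+1 from by omega, Cq_succ_left (show n ≤ n+d by omega),
      show 2*(n+d+1)+1 = 2*(n+d)+3 from by omega, mul_assoc]

lemma CqW {n M : ℕ} (h : n ≤ M) :
    Cq M n * (qpoch X (X^2) (M+1))⁻¹ = (qpoch X (X^2) (n+1))⁻¹ := by
  obtain ⟨d, rfl⟩ := Nat.exists_eq_add_of_le h
  rw [show n+d+1 = n+d+1 from rfl, Dsplit, PowerSeries.mul_inv_rev, ← mul_assoc,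
    PowerSeries.mul_inv_cancel _ (by rw [cc_Cq]; exact one_ne_zero), one_mul]

lemma inv_sq' (a : PowerSeries ℚ) : (a^2)⁻¹ = a⁻¹ * a⁻¹ := by
  rw [pow_two, PowerSeries.mul_inv_rev]

lemma VW (n : ℕ) : Vb n = X^n * (qpoch X (X^2) (n+1))⁻¹ := by
  calc Vb n = Vb n * (qpoch X (X^2) (n+1) * (qpoch X (X^2) (n+1))⁻¹) := by
        rw [PowerSeries.mul_inv_cancel _ (by rw [cc_DqX]; exact one_ne_zero), mul_one]
    _ = (Vb n * qpoch X (X^2) (n+1)) * (qpoch X (X^2) (n+1))⁻¹ := by ring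
    _ = X^n * (qpoch X (X^2) (n+1))⁻¹ := by rw [VD]

lemma AW (M : ℕ) :
    (∑ n ∈ Finset.range (M+1),
      X^(n*n) * Pp n * Gb M n * (qpoch X (X^2) (n+1))⁻¹)
    = Aq M * (qpoch X (X^2) (M+1))⁻¹ := by
  rw [← KI M, Finset.sum_mul]
  apply Finset.sum_congr rfl
  intro n hn
  have hnM : n ≤ M := by have := Finset.mem_range.mp hn; omega
  rw [fM, mul_assoc (X ^ (n*n) * Pp n * Gb M n) (Cq M n), CqW hnM]

end Stmt1Aux


open Stmt1Aux in
/-- Σ_{n≥0} q^{n(n+1)} (-q²;q²)_n / ((q;q²)_{n+1})² = Σ_{n≥0} q^n (-q;q²)_n / (q;q²)_{n+1},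
both sides read off coefficientwise (the n-th summand of either side has q-order ≥ n). -/
theorem stmt1 :
    betaF = PowerSeries.mk (fun N => ∑ m ∈ Finset.range (N + 1),
      PowerSeries.coeff N (PowerSeries.X ^ m * qpoch (-PowerSeries.X) (PowerSeries.X ^ 2) m
        * (qpoch PowerSeries.X (PowerSeries.X ^ 2) (m + 1))⁻¹)) := by
  ext N
  rw [betaF, PowerSeries.coeff_mk, PowerSeries.coeff_mk]
  have hbt : ∀ n : ℕ, betaTerm n
      = (X^(n*n) * Pp n * (qpoch X (X^2) (n+1))⁻¹) * Vb n := by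
    intro n
    rw [betaTerm, VW, inv_sq', Pp]
    ring
  have htr : ∀ n : ℕ, ∃ E : PowerSeries ℚ,
      Vb n = (∑ M ∈ Finset.range (N+1), X^M * Gb M n) + X^(N+1) * E := by
    intro n
    have hdvd : (X : PowerSeries ℚ)^(N+1)
        ∣ (Vb n - ∑ M ∈ Finset.range (N+1), X^M * Gb M n) := by
      rw [PowerSeries.X_pow_dvd_iff]
      intro k hk
      rw [map_sub, Vb, PowerSeries.coeff_mk, map_sum, sub_eq_zero]
      apply Finset.sum_subset (Finset.range_subset_range.mpr (by omega))
      intro m _ hmk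
      rw [Finset.mem_range, not_lt] at hmk
      exact coeff_X_pow_mul_lt (by omega)
    obtain ⟨E, hE⟩ := hdvd
    exact ⟨E, by linear_combination hE⟩
  have hcoeff : ∀ n : ℕ, PowerSeries.coeff N (betaTerm n)
      = ∑ M ∈ Finset.range (N+1), PowerSeries.coeff N
          (X^M * (X^(n*n) * Pp n * Gb M n * (qpoch X (X^2) (n+1))⁻¹)) := by
    intro n
    obtain ⟨E, hE⟩ := htr n
    rw [hbt n, hE, mul_add, Finset.mul_sum, map_add, map_sum]
    have hz : PowerSeries.coeff N
        ((X^(n*n) * Pp n * (qpoch X (X^2) (n+1))⁻¹) * (X^(N+1) * E)) = 0 := by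
      rw [show (X^(n*n) * Pp n * (qpoch X (X^2) (n+1))⁻¹) * (X^(N+1) * E)
          = X^(N+1) * ((X^(n*n) * Pp n * (qpoch X (X^2) (n+1))⁻¹) * E) from by ring]
      exact coeff_X_pow_mul_lt (by omega)
    rw [hz, add_zero]
    apply Finset.sum_congr rfl
    intro M _
    congr 1
    ring
  rw [Finset.sum_congr rfl (fun n _ => hcoeff n), Finset.sum_comm]
  apply Finset.sum_congr rfl
  intro M hM
  have hMN : M ≤ N := by
    have := Finset.mem_range.mp hM; omega
  have hzero : ∀ n ∈ Finset.range (N+1), n ∉ Finset.range (M+1) →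
      PowerSeries.coeff N
        (X^M * (X^(n*n) * Pp n * Gb M n * (qpoch X (X^2) (n+1))⁻¹)) = 0 := by
    intro n _ hn
    rw [Finset.mem_range, not_lt] at hn
    rw [Gb_eq_zero (show M < n by omega)]
    rw [show (X:PowerSeries ℚ)^M * (X^(n*n) * Pp n * 0 * (qpoch X (X^2) (n+1))⁻¹) = 0
      from by ring, map_zero]
  rw [← Finset.sum_subset (Finset.range_subset_range.mpr (by omega) :
      Finset.range (M+1) ⊆ Finset.range (N+1)) hzero]
  rw [← map_sum, ← Finset.mul_sum, AW M]
  congr 1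
  rw [Aq]
  ring
end
end

section
/- For all integers i, j ≥ 1: if 3j - i - 1 ≥ 0 then 3^⌊(3j-i-1)/2⌋ divides a(i,j), and if 3j - i ≥ 0 then 3^⌊(3j-i)/2⌋ divides b(i,j). -/
open PowerSeries

noncomputable section

/-- The matrix (a(i,j)). Entries with column index 0 are 0 (standing for columns j ≤ 0);
rows 1–3 are the tabulated initial data; rows i ≥ 4 follow the recurrence. -/
def am : ℕ → ℕ → ℤ
  | 1, 1 => 10
  | 1, 2 => -36
  | 1, 3 => 27
  | 2, 1 => -8
  | 2, 2 => 306
  | 2, 3 => -2160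
  | 2, 4 => 5508
  | 2, 5 => -5832
  | 2, 6 => 2187
  | 3, 1 => 1
  | 3, 2 => -360
  | 3, 3 => 10566
  | 3, 4 => -99144
  | 3, 5 => 423549
  | 3, 6 => -944784
  | 3, 7 => 1141614
  | 3, 8 => -708588
  | 3, 9 => 177147
  | i + 4, j =>
      30 * am (i + 3) (j - 1) - 108 * am (i + 3) (j - 2) + 81 * am (i + 3) (j - 3)
        - 12 * am (i + 2) (j - 1) + 9 * am (i + 2) (j - 2) + am (i + 1) (j - 1)
  | _, _ => 0

/-- The matrix (b(i,j)). -/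
def bm : ℕ → ℕ → ℤ
  | 1, 1 => -9
  | 1, 2 => 252
  | 1, 3 => -891
  | 1, 4 => 729
  | 2, 1 => 1
  | 2, 2 => -378
  | 2, 3 => 8613
  | 2, 4 => -54675
  | 2, 5 => 138510
  | 2, 6 => -150903
  | 2, 7 => 59049
  | 3, 2 => 147
  | 3, 3 => -14553
  | 3, 4 => 312255
  | 3, 5 => -2617839
  | 3, 6 => 10764414
  | 3, 7 => -23914845
  | 3, 8 => 29288304
  | 3, 9 => -18600435
  | 3, 10 => 4782969
  | i + 4, j =>
      30 * bm (i + 3) (j - 1) - 108 * bm (i + 3) (j - 2) + 81 * bm (i + 3) (j - 3)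
        - 12 * bm (i + 2) (j - 1) + 9 * bm (i + 2) (j - 2) + bm (i + 1) (j - 1)
  | _, _ => 0

/-- The sequences d_α (α ≥ 1, indexed by j ≥ 1): d₁ = (9,0,0,…) and, for α ≥ 2,
d_α(j) = Σ_{k≥1} a(k,j) d_{α-1}(k) if α is even, Σ_{k≥1} b(k,j) d_{α-1}(k) if α is odd.
(The `finsum` over all k : ℕ agrees, since a(0,j) = b(0,j) = 0 and only finitely many
terms are nonzero.) -/
noncomputable def dseq : ℕ → ℕ → ℤ
  | 0, _ => 0
  | 1, j => if j = 1 then 9 else 0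
  | α + 2, j =>
      if (α + 2) % 2 = 0 then ∑ᶠ k : ℕ, am k j * dseq (α + 1) k
      else ∑ᶠ k : ℕ, bm k j * dseq (α + 1) k

private lemma am_rec (n j : ℕ) : am (n+4) j =
    30 * am (n + 3) (j - 1) - 108 * am (n + 3) (j - 2) + 81 * am (n + 3) (j - 3)
      - 12 * am (n + 2) (j - 1) + 9 * am (n + 2) (j - 2) + am (n + 1) (j - 1) := rfl

private lemma bm_rec (n j : ℕ) : bm (n+4) j =
    30 * bm (n + 3) (j - 1) - 108 * bm (n + 3) (j - 2) + 81 * bm (n + 3) (j - 3)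
      - 12 * bm (n + 2) (j - 1) + 9 * bm (n + 2) (j - 2) + bm (n + 1) (j - 1) := rfl

private lemma dvd_helper (y : ℤ) {E e m : ℕ} {x : ℤ} (h : (3:ℤ)^e ∣ x)
    (hy : (3:ℤ)^m ∣ y) (hle : E ≤ e + m) : (3:ℤ)^E ∣ y * x := by
  refine dvd_trans (pow_dvd_pow 3 hle) ?_
  rw [add_comm, pow_add]
  exact mul_dvd_mul hy h

private lemma key : ∀ i j : ℕ,
    ((3:ℤ)^((3*j - i - 1)/2) ∣ am i j) ∧ ((3:ℤ)^((3*j - i)/2) ∣ bm i j) := by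
  intro i
  induction i using Nat.strong_induction_on with
  | _ i IH =>
    match i with
    | 0 => intro j; exact ⟨dvd_zero _, dvd_zero _⟩
    | 1 =>
      intro j
      rcases j with _|_|_|_|_|j
      · exact ⟨dvd_zero _, dvd_zero _⟩
      · exact ⟨by decide, by decide⟩
      · exact ⟨by decide, by decide⟩
      · exact ⟨by decide, by decide⟩
      · exact ⟨by decide, by decide⟩
      · exact ⟨dvd_zero _, dvd_zero _⟩
    | 2 =>
      intro j
      rcases j with _|_|_|_|_|_|_|_|j
      · exact ⟨dvd_zero _, dvd_zero _⟩
      · exact ⟨by decide, by decide⟩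
      · exact ⟨by decide, by decide⟩
      · exact ⟨by decide, by decide⟩
      · exact ⟨by decide, by decide⟩
      · exact ⟨by decide, by decide⟩
      · exact ⟨by decide, by decide⟩
      · exact ⟨by decide, by decide⟩
      · exact ⟨dvd_zero _, dvd_zero _⟩
    | 3 =>
      intro j
      rcases j with _|_|_|_|_|_|_|_|_|_|_|j
      · exact ⟨dvd_zero _, dvd_zero _⟩
      · exact ⟨by decide, by decide⟩
      · exact ⟨by decide, by decide⟩
      · exact ⟨by decide, by decide⟩
      · exact ⟨by decide, by decide⟩
      · exact ⟨by decide, by decide⟩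
      · exact ⟨by decide, by decide⟩
      · exact ⟨by decide, by decide⟩
      · exact ⟨by decide, by decide⟩
      · exact ⟨by decide, by decide⟩
      · exact ⟨by decide, by decide⟩
      · exact ⟨dvd_zero _, dvd_zero _⟩
    | n + 4 =>
      intro j
      have IH1 := IH (n+3) (by omega) (j-1)
      have IH2 := IH (n+3) (by omega) (j-2)
      have IH3 := IH (n+3) (by omega) (j-3)
      have IH4 := IH (n+2) (by omega) (j-1)
      have IH5 := IH (n+2) (by omega) (j-2)
      have IH6 := IH (n+1) (by omega) (j-1)
      constructor
      · rw [am_rec]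
        have d1 := dvd_helper (E := (3*j - (n+4) - 1)/2) 30 IH1.1 (show (3:ℤ)^1 ∣ 30 by norm_num) (by omega)
        have d2 := dvd_helper (E := (3*j - (n+4) - 1)/2) 108 IH2.1 (show (3:ℤ)^3 ∣ 108 by norm_num) (by omega)
        have d3 := dvd_helper (E := (3*j - (n+4) - 1)/2) 81 IH3.1 (show (3:ℤ)^4 ∣ 81 by norm_num) (by omega)
        have d4 := dvd_helper (E := (3*j - (n+4) - 1)/2) 12 IH4.1 (show (3:ℤ)^1 ∣ 12 by norm_num) (by omega)
        have d5 := dvd_helper (E := (3*j - (n+4) - 1)/2) 9 IH5.1 (show (3:ℤ)^2 ∣ 9 by norm_num) (by omega)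
        have d6 : (3:ℤ)^((3*j - (n+4) - 1)/2) ∣ am (n+1) (j-1) :=
          dvd_trans (pow_dvd_pow 3 (by omega)) IH6.1
        exact dvd_add (dvd_add (dvd_sub (dvd_add (dvd_sub d1 d2) d3) d4) d5) d6
      · rw [bm_rec]
        have d1 := dvd_helper (E := (3*j - (n+4))/2) 30 IH1.2 (show (3:ℤ)^1 ∣ 30 by norm_num) (by omega)
        have d2 := dvd_helper (E := (3*j - (n+4))/2) 108 IH2.2 (show (3:ℤ)^3 ∣ 108 by norm_num) (by omega)
        have d3 := dvd_helper (E := (3*j - (n+4))/2) 81 IH3.2 (show (3:ℤ)^4 ∣ 81 by norm_num) (by omega)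
        have d4 := dvd_helper (E := (3*j - (n+4))/2) 12 IH4.2 (show (3:ℤ)^1 ∣ 12 by norm_num) (by omega)
        have d5 := dvd_helper (E := (3*j - (n+4))/2) 9 IH5.2 (show (3:ℤ)^2 ∣ 9 by norm_num) (by omega)
        have d6 : (3:ℤ)^((3*j - (n+4))/2) ∣ bm (n+1) (j-1) :=
          dvd_trans (pow_dvd_pow 3 (by omega)) IH6.2
        exact dvd_add (dvd_add (dvd_sub (dvd_add (dvd_sub d1 d2) d3) d4) d5) d6

/-- For i, j ≥ 1: if 3j − i − 1 ≥ 0 then 3^⌊(3j−i−1)/2⌋ ∣ a(i,j), and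
if 3j − i ≥ 0 then 3^⌊(3j−i)/2⌋ ∣ b(i,j). -/
theorem stmt16 (i j : ℕ) (hi : 1 ≤ i) (hj : 1 ≤ j) :
    (i + 1 ≤ 3 * j → (3 : ℤ) ^ ((3 * j - i - 1) / 2) ∣ am i j) ∧
    (i ≤ 3 * j → (3 : ℤ) ^ ((3 * j - i) / 2) ∣ bm i j) :=
  ⟨fun _ => (key i j).1, fun _ => (key i j).2⟩
end
end

section
/- For all integers α ≥ 1 and j ≥ 1, 3^(2α + ⌊(2j-2)/3⌋) divides d_{2α-1}(j). -/
open PowerSeries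

noncomputable section

/-- Exponent invariant for `am`: 3^(Fa i j) divides am i j. -/
def Fa (i j : ℕ) : ℕ :=
  ((4*j-2)/3 - (2*i-2)/3) +
    (if i % 3 = 1 ∧ i ≠ 1 ∧ j % 3 = 1 ∧ (2*i-2)/3 ≤ (4*j-2)/3 then 1 else 0)

/-- Exponent invariant for `bm`: 3^(Gb i j) divides bm i j. -/
def Gb (i j : ℕ) : ℕ := (2 + (2*j-2)/3) - (4*i-2)/3

private lemma mulstep {c x : ℤ} {w e E : ℕ} (hc : (3:ℤ)^w ∣ c) (hx : (3:ℤ)^e ∣ x)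
    (hE : E ≤ w + e) : (3:ℤ)^E ∣ c * x :=
  dvd_trans (pow_dvd_pow 3 hE) (by rw [pow_add]; exact mul_dvd_mul hc hx)

private lemma dvd_finsum {d : ℤ} {f : ℕ → ℤ} (h : ∀ k, d ∣ f k) : d ∣ ∑ᶠ k, f k := by
  by_cases hf : (Function.support f).Finite
  · rw [finsum_eq_sum f hf]; exact Finset.dvd_sum fun i _ => h i
  · rw [finsum_of_infinite_support hf]; exact dvd_zero d

private lemma am_dvd : ∀ i j : ℕ, (3:ℤ)^(Fa i j) ∣ am i j := by
  intro i
  induction i using Nat.strong_induction_on with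
  | _ i IH =>
    intro j
    rcases Nat.lt_or_ge i 4 with h4 | h4
    · rcases Nat.lt_or_ge j 11 with hj | hj
      · interval_cases i <;> interval_cases j <;> decide
      · obtain ⟨j', rfl⟩ : ∃ k, j = k + 11 := ⟨j - 11, by omega⟩
        interval_cases i
        · have e : am 0 (j'+11) = 0 := rfl
          rw [e]; exact dvd_zero _
        · have e : am 1 (j'+11) = 0 := rfl
          rw [e]; exact dvd_zero _
        · have e : am 2 (j'+11) = 0 := rfl
          rw [e]; exact dvd_zero _
        · have e : am 3 (j'+11) = 0 := rfl
          rw [e]; exact dvd_zero _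
    · obtain ⟨i', rfl⟩ : ∃ k, i = k + 4 := ⟨i - 4, by omega⟩
      rcases Nat.lt_or_ge j 2 with hj | hj
      · have h0 : Fa (i'+4) j = 0 := by simp only [Fa]; split_ifs <;> omega
        rw [h0, pow_zero]; exact one_dvd _
      · obtain ⟨j', rfl⟩ : ∃ k, j = k + 2 := ⟨j - 2, by omega⟩
        have h1 := IH (i'+3) (by omega) (j'+1)
        have h2 := IH (i'+3) (by omega) j'
        have h3 := IH (i'+3) (by omega) (j'-1)
        have h4' := IH (i'+2) (by omega) (j'+1)
        have h5 := IH (i'+2) (by omega) j'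
        have h6 := IH (i'+1) (by omega) (j'+1)
        show (3:ℤ)^(Fa (i'+4) (j'+2)) ∣
          30 * am (i'+3) (j'+1) - 108 * am (i'+3) j' + 81 * am (i'+3) (j'-1)
            - 12 * am (i'+2) (j'+1) + 9 * am (i'+2) j' + am (i'+1) (j'+1)
        refine dvd_add (dvd_add (dvd_sub (dvd_add (dvd_sub ?_ ?_) ?_) ?_) ?_) ?_
        · exact mulstep (w := 1) (by norm_num) h1 (by simp only [Fa]; split_ifs <;> omega)
        · exact mulstep (w := 3) (by norm_num) h2 (by simp only [Fa]; split_ifs <;> omega)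
        · exact mulstep (w := 4) (by norm_num) h3 (by simp only [Fa]; split_ifs <;> omega)
        · exact mulstep (w := 1) (by norm_num) h4' (by simp only [Fa]; split_ifs <;> omega)
        · exact mulstep (w := 2) (by norm_num) h5 (by simp only [Fa]; split_ifs <;> omega)
        · exact dvd_trans (pow_dvd_pow 3 (by simp only [Fa]; split_ifs <;> omega)) h6

private lemma bm_dvd : ∀ i j : ℕ, (3:ℤ)^(Gb i j) ∣ bm i j := by
  intro i
  induction i using Nat.strong_induction_on with
  | _ i IH =>
    intro j
    rcases Nat.lt_or_ge i 4 with h4 | h4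
    · rcases Nat.lt_or_ge j 11 with hj | hj
      · interval_cases i <;> interval_cases j <;> decide
      · obtain ⟨j', rfl⟩ : ∃ k, j = k + 11 := ⟨j - 11, by omega⟩
        interval_cases i
        · have e : bm 0 (j'+11) = 0 := rfl
          rw [e]; exact dvd_zero _
        · have e : bm 1 (j'+11) = 0 := rfl
          rw [e]; exact dvd_zero _
        · have e : bm 2 (j'+11) = 0 := rfl
          rw [e]; exact dvd_zero _
        · have e : bm 3 (j'+11) = 0 := rfl
          rw [e]; exact dvd_zero _
    · obtain ⟨i', rfl⟩ : ∃ k, i = k + 4 := ⟨i - 4, by omega⟩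
      rcases Nat.lt_or_ge j 2 with hj | hj
      · have h0 : Gb (i'+4) j = 0 := by simp only [Gb]; omega
        rw [h0, pow_zero]; exact one_dvd _
      · obtain ⟨j', rfl⟩ : ∃ k, j = k + 2 := ⟨j - 2, by omega⟩
        have h1 := IH (i'+3) (by omega) (j'+1)
        have h2 := IH (i'+3) (by omega) j'
        have h3 := IH (i'+3) (by omega) (j'-1)
        have h4' := IH (i'+2) (by omega) (j'+1)
        have h5 := IH (i'+2) (by omega) j'
        have h6 := IH (i'+1) (by omega) (j'+1)
        show (3:ℤ)^(Gb (i'+4) (j'+2)) ∣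
          30 * bm (i'+3) (j'+1) - 108 * bm (i'+3) j' + 81 * bm (i'+3) (j'-1)
            - 12 * bm (i'+2) (j'+1) + 9 * bm (i'+2) j' + bm (i'+1) (j'+1)
        refine dvd_add (dvd_add (dvd_sub (dvd_add (dvd_sub ?_ ?_) ?_) ?_) ?_) ?_
        · exact mulstep (w := 1) (by norm_num) h1 (by simp only [Gb]; omega)
        · exact mulstep (w := 3) (by norm_num) h2 (by simp only [Gb]; omega)
        · exact mulstep (w := 4) (by norm_num) h3 (by simp only [Gb]; omega)
        · exact mulstep (w := 1) (by norm_num) h4' (by simp only [Gb]; omega)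
        · exact mulstep (w := 2) (by norm_num) h5 (by simp only [Gb]; omega)
        · exact dvd_trans (pow_dvd_pow 3 (by simp only [Gb]; omega)) h6

private lemma even_step (n : ℕ)
    (h : ∀ k, 1 ≤ k → (3:ℤ)^(2*n+2 + (2*k-2)/3) ∣ dseq (2*n+1) k) (j : ℕ) :
    (3:ℤ)^(2*n+2 + (4*j-2)/3) ∣ dseq (2*n+2) j := by
  have e : dseq (2*n+2) j = if (2*n+2) % 2 = 0 then ∑ᶠ k : ℕ, am k j * dseq (2*n+1) k
      else ∑ᶠ k : ℕ, bm k j * dseq (2*n+1) k := rfl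
  rw [e, if_pos (by omega)]
  refine dvd_finsum fun k => ?_
  rcases Nat.eq_zero_or_pos k with rfl | hk
  · rw [show am 0 j = 0 from rfl, zero_mul]
    exact dvd_zero _
  · exact mulstep (am_dvd k j) (h k hk) (by simp only [Fa]; split_ifs <;> omega)

private lemma odd_step (n : ℕ)
    (h : ∀ k, 1 ≤ k → (3:ℤ)^(2*n+2 + (4*k-2)/3) ∣ dseq (2*n+2) k) (j : ℕ) :
    (3:ℤ)^(2*n+4 + (2*j-2)/3) ∣ dseq (2*n+3) j := by
  have e : dseq (2*n+3) j = if (2*n+3) % 2 = 0 then ∑ᶠ k : ℕ, am k j * dseq (2*n+2) k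
      else ∑ᶠ k : ℕ, bm k j * dseq (2*n+2) k := rfl
  rw [e, if_neg (by omega)]
  refine dvd_finsum fun k => ?_
  rcases Nat.eq_zero_or_pos k with rfl | hk
  · rw [show bm 0 j = 0 from rfl, zero_mul]
    exact dvd_zero _
  · exact mulstep (bm_dvd k j) (h k hk) (by simp only [Gb]; omega)

private lemma dseq_odd : ∀ n : ℕ, ∀ j, 1 ≤ j →
    (3:ℤ)^(2*n+2 + (2*j-2)/3) ∣ dseq (2*n+1) j := by
  intro n
  induction n with
  | zero =>
    intro j hj
    obtain ⟨j', rfl⟩ : ∃ k, j = k + 1 := ⟨j - 1, by omega⟩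
    rcases j' with _ | j'
    · have e : dseq 1 1 = 9 := rfl
      rw [e]
      norm_num
    · have e : dseq 1 (j'+2) = if j'+2 = 1 then 9 else 0 := rfl
      rw [e, if_neg (by omega)]
      exact dvd_zero _
  | succ n ih =>
    intro j hj
    have h := odd_step n (fun k _ => even_step n ih k) j
    have e1 : 2*(n+1)+1 = 2*n+3 := by omega
    have e2 : 2*(n+1)+2 + (2*j-2)/3 = 2*n+4 + (2*j-2)/3 := by omega
    rw [e1, e2]
    exact h

/-- For α, j ≥ 1, 3^(2α + ⌊(2j−2)/3⌋) divides d_{2α-1}(j). -/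
theorem stmt17 (α j : ℕ) (hα : 1 ≤ α) (hj : 1 ≤ j) :
    (3 : ℤ) ^ (2 * α + (2 * j - 2) / 3) ∣ dseq (2 * α - 1) j := by
  obtain ⟨n, rfl⟩ : ∃ n, α = n + 1 := ⟨α - 1, by omega⟩
  have h := dseq_odd n j hj
  have e1 : 2 * (n+1) - 1 = 2*n+1 := by omega
  have e2 : 2 * (n+1) + (2*j-2)/3 = 2*n+2 + (2*j-2)/3 := by omega
  rw [e1, e2]
  exact h
end
end
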